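/- (Correctness of P-Tucker, Theorem 1 of the paper.) Assume λ > 0, fix a mode n and a row index i_n ∈ {1,…,I_n}, and keep G, all factor matrices other than A^(n), and all rows of A^(n) other than row i_n fixed. Then the row a* = (B^{(n)}_{i_n} + λ I_{J_n})^{-1} c^{(n)}_{i_n} (where I_{J_n} is the J_n×J_n identity matrix, and B^{(n)}_{i_n}, c^{(n)}_{i_n} are computed from the fixed quantities) minimizes the Tucker loss L over all choices of the i_n-th row of A^(n): for every a ∈ ℝ^{J_n}, the loss with the i_n-th row set to a* is less than or equal to the loss with the i_n-th row set to a. -/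

import Mathlib

open Finset Matrix

/-- The Tucker loss (Equation (7)):
`L(G, A⁽¹⁾,…,A⁽ᴺ⁾) = ∑_{i∈Ω} (X_i − ∑_j G_j ∏_n A⁽ⁿ⁾_{iₙ jₙ})² + λ ∑_n ‖A⁽ⁿ⁾‖_F²`. -/
noncomputable def tuckerLoss {N : ℕ} (I J : Fin N → ℕ)
    (Ω : Finset ((k : Fin N) → Fin (I k)))
    (X : ((k : Fin N) → Fin (I k)) → ℝ)
    (G : ((k : Fin N) → Fin (J k)) → ℝ)
    (A : (n : Fin N) → Matrix (Fin (I n)) (Fin (J n)) ℝ)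
    (lam : ℝ) : ℝ :=
  (∑ i ∈ Ω,
      (X i - ∑ j : (k : Fin N) → Fin (J k), G j * ∏ n, A n (i n) (j n)) ^ 2)
    + lam * ∑ n, ∑ p, ∑ q, A n p q ^ 2

/-- The vector `δ⁽ⁿ⁾_i ∈ ℝ^{Jₙ}` (Equation (10)):
`δ⁽ⁿ⁾_i(j) = ∑_{j' : j'ₙ = j} G_{j'} ∏_{k≠n} A⁽ᵏ⁾_{iₖ j'ₖ}`. -/
noncomputable def deltaVec {N : ℕ} (I J : Fin N → ℕ)
    (G : ((k : Fin N) → Fin (J k)) → ℝ)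
    (A : (n : Fin N) → Matrix (Fin (I n)) (Fin (J n)) ℝ)
    (n : Fin N) (i : (k : Fin N) → Fin (I k)) : Fin (J n) → ℝ :=
  fun j =>
    ∑ j' ∈ Finset.univ.filter (fun j' : (k : Fin N) → Fin (J k) => j' n = j),
      G j' * ∏ k ∈ Finset.univ.erase n, A k (i k) (j' k)

/-- The matrix `B⁽ⁿ⁾_{iₙ} ∈ ℝ^{Jₙ×Jₙ}` (Equation (8)), whose `(j₁,j₂)` entry is
`∑_{i ∈ Ω⁽ⁿ⁾_{iₙ}} δ⁽ⁿ⁾_i(j₁) δ⁽ⁿ⁾_i(j₂)`. -/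
noncomputable def Bmat {N : ℕ} (I J : Fin N → ℕ)
    (Ω : Finset ((k : Fin N) → Fin (I k)))
    (G : ((k : Fin N) → Fin (J k)) → ℝ)
    (A : (n : Fin N) → Matrix (Fin (I n)) (Fin (J n)) ℝ)
    (n : Fin N) (r : Fin (I n)) : Matrix (Fin (J n)) (Fin (J n)) ℝ :=
  fun j1 j2 =>
    ∑ i ∈ Ω.filter (fun i => i n = r),
      deltaVec I J G A n i j1 * deltaVec I J G A n i j2

/-- The vector `c⁽ⁿ⁾_{iₙ} ∈ ℝ^{Jₙ}` (Equation (9)), whose `j`th entry is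
`∑_{i ∈ Ω⁽ⁿ⁾_{iₙ}} X_i δ⁽ⁿ⁾_i(j)`. -/
noncomputable def cvec {N : ℕ} (I J : Fin N → ℕ)
    (Ω : Finset ((k : Fin N) → Fin (I k)))
    (X : ((k : Fin N) → Fin (I k)) → ℝ)
    (G : ((k : Fin N) → Fin (J k)) → ℝ)
    (A : (n : Fin N) → Matrix (Fin (I n)) (Fin (J n)) ℝ)
    (n : Fin N) (r : Fin (I n)) : Fin (J n) → ℝ :=
  fun j => ∑ i ∈ Ω.filter (fun i => i n = r), X i * deltaVec I J G A n i j

/-! Once everything but row `r` of `A⁽ⁿ⁾` is fixed, every model entry with `iₙ = r` is the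
linear form `δ⁽ⁿ⁾_i ⬝ a` in the new row `a`, and nothing else in the loss depends on `a`. So up
to a constant the loss is the ridge objective `‖y - D a‖² + λ‖a‖²`, where the rows of `D` are the
`δ⁽ⁿ⁾_i` and hence `B = DᵀD`, `c = Dᵀy`. As `DᵀD + λI` is positive definite, `a*` solves the
normal equations `(DᵀD + λI) a* = Dᵀy`, and these give
`f(a* + u) = f(a*) + ‖D u‖² + λ‖u‖² ≥ f(a*)`. -/

section Ridge

variable {ι κ : Type*} [Fintype ι] [Fintype κ]

def ridgeObjective (D : Matrix ι κ ℝ) (y : ι → ℝ) (lam : ℝ) (a : κ → ℝ) : ℝ :=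
  (y - D *ᵥ a) ⬝ᵥ (y - D *ᵥ a) + lam * (a ⬝ᵥ a)

variable [DecidableEq κ] {D : Matrix ι κ ℝ} {y : ι → ℝ} {lam : ℝ}

theorem ridgeObjective_add_of_normalEq {a₀ : κ → ℝ}
    (h : (Dᵀ * D + lam • 1) *ᵥ a₀ = Dᵀ *ᵥ y) (u : κ → ℝ) :
    ridgeObjective D y lam (a₀ + u)
      = ridgeObjective D y lam a₀ + (D *ᵥ u) ⬝ᵥ (D *ᵥ u) + lam * (u ⬝ᵥ u) := by
  have hres : Dᵀ *ᵥ (y - D *ᵥ a₀) = lam • a₀ := by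
    rw [mulVec_sub, ← h, mulVec_mulVec, add_mulVec, smul_mulVec, one_mulVec]
    abel
  have hcross : (y - D *ᵥ a₀) ⬝ᵥ (D *ᵥ u) = lam * (a₀ ⬝ᵥ u) := by
    rw [dotProduct_mulVec, ← mulVec_transpose, hres, smul_dotProduct, smul_eq_mul]
  rw [ridgeObjective, ridgeObjective, mulVec_add, ← sub_sub]
  generalize y - D *ᵥ a₀ = e at hcross ⊢
  simp only [sub_dotProduct, dotProduct_sub, add_dotProduct, dotProduct_add]
  rw [dotProduct_comm (D *ᵥ u) e, hcross, dotProduct_comm u a₀]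
  ring

theorem ridgeObjective_le_of_normalEq (hlam : 0 ≤ lam) {a₀ : κ → ℝ}
    (h : (Dᵀ * D + lam • 1) *ᵥ a₀ = Dᵀ *ᵥ y) (a : κ → ℝ) :
    ridgeObjective D y lam a₀ ≤ ridgeObjective D y lam a := by
  rw [← add_sub_cancel a₀ a, ridgeObjective_add_of_normalEq h]
  have hDu := dotProduct_star_self_nonneg (D *ᵥ (a - a₀))
  have hu := dotProduct_star_self_nonneg (a - a₀)
  simp only [star_trivial] at hDu hu
  nlinarith

theorem posDef_transpose_mul_self_add_smul_one (hlam : 0 < lam) :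
    (Dᵀ * D + lam • (1 : Matrix κ κ ℝ)).PosDef := by
  have hD : (Dᵀ * D).PosSemidef := by
    rw [← conjTranspose_eq_transpose_of_trivial]
    exact posSemidef_conjTranspose_mul_self D
  exact PosDef.posSemidef_add hD (PosDef.one.smul hlam)

theorem ridgeObjective_inv_le (hlam : 0 < lam) (a : κ → ℝ) :
    ridgeObjective D y lam ((Dᵀ * D + lam • 1)⁻¹ *ᵥ (Dᵀ *ᵥ y)) ≤ ridgeObjective D y lam a := by
  have hdet : IsUnit (Dᵀ * D + lam • 1 : Matrix κ κ ℝ).det :=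
    (isUnit_iff_isUnit_det _).mp (posDef_transpose_mul_self_add_smul_one hlam).isUnit
  refine ridgeObjective_le_of_normalEq hlam.le ?_ a
  rw [mulVec_mulVec, mul_nonsing_inv _ hdet, one_mulVec]

end Ridge

theorem Finset.sum_univ_update {ι M : Type*} [Fintype ι] [DecidableEq ι] [AddCommGroup M]
    (f : ι → M) (i : ι) (b : M) :
    ∑ x, Function.update f i b x = ∑ x, f x - f i + b := by
  rw [sum_update_of_mem (mem_univ i), sum_eq_add_sum_sdiff_singleton_of_mem (mem_univ i)]
  abel

section Tucker

variable {N : ℕ} {I J : Fin N → ℕ} (Ω : Finset ((k : Fin N) → Fin (I k)))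
  (X : ((k : Fin N) → Fin (I k)) → ℝ) (G : ((k : Fin N) → Fin (J k)) → ℝ)
  (A : (n : Fin N) → Matrix (Fin (I n)) (Fin (J n)) ℝ) (n : Fin N) (r : Fin (I n))

noncomputable def rowDesign : Matrix (Ω.filter fun i => i n = r) (Fin (J n)) ℝ :=
  of fun i q => deltaVec I J G A n i q

theorem Bmat_eq_transpose_mul_rowDesign :
    Bmat I J Ω G A n r = (rowDesign Ω G A n r)ᵀ * rowDesign Ω G A n r := by
  ext j₁ j₂
  simp only [Bmat, rowDesign, mul_apply, transpose_apply, of_apply]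
  exact (sum_coe_sort _ fun i => deltaVec I J G A n i j₁ * deltaVec I J G A n i j₂).symm

theorem cvec_eq_transpose_rowDesign_mulVec :
    cvec I J Ω X G A n r = (rowDesign Ω G A n r)ᵀ *ᵥ fun i => X i := by
  ext q
  simp only [cvec, rowDesign, mulVec_transpose, vecMul, dotProduct, of_apply]
  exact (sum_coe_sort _ fun i => X i * deltaVec I J G A n i q).symm

theorem sum_core_mul_prod_eq_sum_deltaVec_mul (i : (k : Fin N) → Fin (I k)) :
    ∑ j, G j * ∏ k, A k (i k) (j k) = ∑ q, deltaVec I J G A n i q * A n (i n) q := by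
  rw [← sum_fiberwise univ (fun j : (k : Fin N) → Fin (J k) => j n)]
  refine sum_congr rfl fun q _ => ?_
  rw [deltaVec, sum_mul]
  refine sum_congr rfl fun j hj => ?_
  rw [← mul_prod_erase univ _ (mem_univ n), (mem_filter.mp hj).2]
  ring

variable {G A n}

theorem deltaVec_update_self (M : Matrix (Fin (I n)) (Fin (J n)) ℝ) :
    deltaVec I J G (Function.update A n M) n = deltaVec I J G A n := by
  ext i q
  refine sum_congr rfl fun j _ => congrArg (G j * ·) (prod_congr rfl fun k hk => ?_)
  rw [Function.update_of_ne (ne_of_mem_erase hk)]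

theorem update_updateRow_apply_of_ne {r : Fin (I n)} (a : Fin (J n) → ℝ)
    {i : (k : Fin N) → Fin (I k)} (hi : i n ≠ r) (k : Fin N) :
    Function.update A n ((A n).updateRow r a) k (i k) = A k (i k) := by
  obtain rfl | hk := eq_or_ne k n
  · rw [Function.update_self, updateRow_ne hi]
  · rw [Function.update_of_ne hk]

theorem sum_sq_update_updateRow (r : Fin (I n)) (a : Fin (J n) → ℝ) :
    ∑ m, ∑ p, ∑ q, Function.update A n ((A n).updateRow r a) m p q ^ 2
      = ∑ m, ∑ p, ∑ q, A m p q ^ 2 - ∑ q, A n r q ^ 2 + ∑ q, a q ^ 2 := by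
  have hrow : ∑ p, ∑ q, (A n).updateRow r a p q ^ 2
      = ∑ p, Function.update (fun p => ∑ q, A n p q ^ 2) r (∑ q, a q ^ 2) p :=
    sum_congr rfl fun p _ =>
      Function.apply_update (fun _ (v : Fin (J n) → ℝ) => ∑ q, v q ^ 2) (A n) r a p
  calc ∑ m, ∑ p, ∑ q, Function.update A n ((A n).updateRow r a) m p q ^ 2
      = ∑ m, Function.update (fun m => ∑ p, ∑ q, A m p q ^ 2) n
          (∑ p, ∑ q, (A n).updateRow r a p q ^ 2) m :=
        sum_congr rfl fun m _ => Function.apply_update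
          (fun m (M : Matrix (Fin (I m)) (Fin (J m)) ℝ) => ∑ p, ∑ q, M p q ^ 2) A n _ m
    _ = _ := by
      rw [Finset.sum_univ_update, hrow, Finset.sum_univ_update]
      abel

variable (G A n)

theorem tuckerLoss_update_updateRow (lam : ℝ) (a : Fin (J n) → ℝ) :
    tuckerLoss I J Ω X G (Function.update A n ((A n).updateRow r a)) lam
      = ridgeObjective (rowDesign Ω G A n r) (fun i => X i) lam a
        + ((∑ i ∈ Ω.filter fun i => ¬ i n = r, (X i - ∑ j, G j * ∏ k, A k (i k) (j k)) ^ 2)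
          + lam * (∑ m, ∑ p, ∑ q, A m p q ^ 2 - ∑ q, A n r q ^ 2)) := by
  set A' := Function.update A n ((A n).updateRow r a) with hA'
  have hrow : ∑ i ∈ Ω.filter (fun i => i n = r), (X i - ∑ j, G j * ∏ k, A' k (i k) (j k)) ^ 2
      = ((fun i : Ω.filter (fun i => i n = r) => X i) - rowDesign Ω G A n r *ᵥ a) ⬝ᵥ
          ((fun i : Ω.filter (fun i => i n = r) => X i) - rowDesign Ω G A n r *ᵥ a) := by
    rw [← sum_coe_sort]
    refine sum_congr rfl fun i _ => ?_
    have hi : (i : (k : Fin N) → Fin (I k)) n = r := (mem_filter.mp i.2).2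
    rw [sum_core_mul_prod_eq_sum_deltaVec_mul G A' n, deltaVec_update_self, hA',
      Function.update_self, hi, updateRow_self, sq]
    rfl
  have hrest : ∑ i ∈ Ω.filter (fun i => ¬ i n = r),
        (X i - ∑ j, G j * ∏ k, A' k (i k) (j k)) ^ 2
      = ∑ i ∈ Ω.filter (fun i => ¬ i n = r), (X i - ∑ j, G j * ∏ k, A k (i k) (j k)) ^ 2 :=
    sum_congr rfl fun i hi => by
      simp only [update_updateRow_apply_of_ne a (mem_filter.mp hi).2, A']
  rw [tuckerLoss, ← sum_filter_add_sum_filter_not Ω (fun i => i n = r), hrow, hrest,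
    sum_sq_update_updateRow, ridgeObjective]
  simp only [dotProduct, sq]
  ring

end Tucker

theorem ptucker_row_update_correct_general
    (N : ℕ) (I J : Fin N → ℕ)
    (Ω : Finset ((k : Fin N) → Fin (I k)))
    (X : ((k : Fin N) → Fin (I k)) → ℝ)
    (G : ((k : Fin N) → Fin (J k)) → ℝ)
    (A : (n : Fin N) → Matrix (Fin (I n)) (Fin (J n)) ℝ)
    (lam : ℝ) (hlam : 0 < lam) (n : Fin N) (r : Fin (I n))
    (astar : Fin (J n) → ℝ)
    (hastar : astar =
      (Bmat I J Ω G A n r + lam • (1 : Matrix (Fin (J n)) (Fin (J n)) ℝ))⁻¹.mulVec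
        (cvec I J Ω X G A n r)) :
    ∀ a : Fin (J n) → ℝ,
      tuckerLoss I J Ω X G (Function.update A n ((A n).updateRow r astar)) lam
        ≤ tuckerLoss I J Ω X G (Function.update A n ((A n).updateRow r a)) lam := by
  intro a
  rw [Bmat_eq_transpose_mul_rowDesign, cvec_eq_transpose_rowDesign_mulVec] at hastar
  rw [tuckerLoss_update_updateRow, tuckerLoss_update_updateRow, hastar]
  exact add_le_add_left (ridgeObjective_inv_le hlam a) _

/-- Correctness of P-Tucker, Theorem 1: for `λ > 0`, the row
`a* = (B⁽ⁿ⁾_r + λ I)⁻¹ c⁽ⁿ⁾_r` minimizes the Tucker loss over all choices of the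
`r`-th row of `A⁽ⁿ⁾`, everything else fixed. -/
theorem ptucker_row_update_correct
    (N : ℕ) (hN : 0 < N) (I J : Fin N → ℕ) (hI : ∀ k, 0 < I k) (hJ : ∀ k, 0 < J k)
    (Ω : Finset ((k : Fin N) → Fin (I k)))
    (X : ((k : Fin N) → Fin (I k)) → ℝ)
    (G : ((k : Fin N) → Fin (J k)) → ℝ)
    (A : (n : Fin N) → Matrix (Fin (I n)) (Fin (J n)) ℝ)
    (lam : ℝ) (hlam : 0 < lam) (n : Fin N) (r : Fin (I n))
    (astar : Fin (J n) → ℝ)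
    (hastar : astar =
      (Bmat I J Ω G A n r + lam • (1 : Matrix (Fin (J n)) (Fin (J n)) ℝ))⁻¹.mulVec
        (cvec I J Ω X G A n r)) :
    ∀ a : Fin (J n) → ℝ,
      tuckerLoss I J Ω X G (Function.update A n ((A n).updateRow r astar)) lam
        ≤ tuckerLoss I J Ω X G (Function.update A n ((A n).updateRow r a)) lam :=
  ptucker_row_update_correct_general N I J Ω X G A lam hlam n r astar hastar
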